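/- arXiv:1403.0022 — 2 statements merged into one kernel-verified Lean document; each statement's English description precedes it below -/
import Mathlib

section
/- Let v_θ(r) = r^α for α ∈ (0,1). The vector field v(x,y,z) = r^{α-1}(-y, x, 0), where r = √(x²+y²), extended by 0 at the origin, is α-Hölder continuous on the closed unit ball of ℝ³. -/
/-!
Writing `π p = (p₀, p₁)` for the horizontal projection, `vField α p` is the rotation by a right
angle of `f (π p)`, where `f u = ‖u‖ ^ (α - 1) • u`. Since `π` is `1`-Lipschitz, it suffices that
`f` is `α`-Hölder with constant `2` on any real normed space. With `‖v‖ ≤ ‖u‖ = a` and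
`d = ‖u - v‖`: if `a ≤ d`, each of `f u`, `f v` has norm at most `d ^ α`; if `d < a`, split
`f u - f v = a ^ (α - 1) • (u - v) + (a ^ (α - 1) - ‖v‖ ^ (α - 1)) • v`, bound both terms by
`a ^ (α - 1) * d`, and use `a ^ (α - 1) ≤ d ^ (α - 1)`.
-/

open Real

namespace Real

lemma rpow_sub_one_mul_self {t : ℝ} (ht : t ≠ 0) (α : ℝ) : t ^ (α - 1) * t = t ^ α := by
  rw [rpow_sub_one ht, div_mul_cancel₀ _ ht]

lemma rpow_sub_one_mul_self_le {t : ℝ} (ht : 0 ≤ t) (α : ℝ) : t ^ (α - 1) * t ≤ t ^ α := by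
  rcases ht.eq_or_lt with rfl | ht
  · simpa using rpow_nonneg le_rfl α
  · exact (rpow_sub_one_mul_self ht.ne' α).le

lemma rpow_sub_one_mul_le_rpow {a d α : ℝ} (hd : 0 ≤ d) (hda : d ≤ a) (hα : α ≤ 1) :
    a ^ (α - 1) * d ≤ d ^ α := by
  rcases hd.eq_or_lt with rfl | hd
  · simpa using rpow_nonneg le_rfl α
  · calc a ^ (α - 1) * d ≤ d ^ (α - 1) * d :=
          mul_le_mul_of_nonneg_right (rpow_le_rpow_of_nonpos hd hda (by linarith)) hd.le
      _ = d ^ α := rpow_sub_one_mul_self hd.ne' α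

lemma abs_rpow_sub_one_sub_mul_le {a b α : ℝ} (hb : 0 ≤ b) (hba : b ≤ a) (hα₀ : 0 ≤ α)
    (hα₁ : α ≤ 1) : |b ^ (α - 1) - a ^ (α - 1)| * b ≤ a ^ (α - 1) * (a - b) := by
  have ha : 0 ≤ a := hb.trans hba
  rcases hb.eq_or_lt with rfl | hb
  · simpa using mul_nonneg (rpow_nonneg ha (α - 1)) ha
  have hpow : a ^ (α - 1) ≤ b ^ (α - 1) := rpow_le_rpow_of_nonpos hb hba (by linarith)
  have hb' : b ^ (α - 1) * b = b ^ α := rpow_sub_one_mul_self hb.ne' α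
  have ha' : a ^ (α - 1) * a = a ^ α := rpow_sub_one_mul_self (hb.trans_le hba).ne' α
  have hmono : b ^ α ≤ a ^ α := rpow_le_rpow hb.le hba hα₀
  rw [abs_of_nonneg (sub_nonneg.2 hpow), sub_mul, mul_sub, hb', ha']
  linarith

end Real

theorem norm_rpow_sub_one_smul_sub_le {E : Type*} [SeminormedAddCommGroup E] [NormedSpace ℝ E]
    {α : ℝ} (hα₀ : 0 ≤ α) (hα₁ : α ≤ 1) (u v : E) :
    ‖‖u‖ ^ (α - 1) • u - ‖v‖ ^ (α - 1) • v‖ ≤ 2 * ‖u - v‖ ^ α := by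
  wlog hvu : ‖v‖ ≤ ‖u‖ generalizing u v
  · rw [norm_sub_rev, norm_sub_rev u]
    exact this v u (le_of_not_ge hvu)
  have hnorm (w : E) : ‖‖w‖ ^ (α - 1) • w‖ = ‖w‖ ^ (α - 1) * ‖w‖ := by
    rw [norm_smul, norm_of_nonneg (rpow_nonneg (norm_nonneg w) _)]
  rcases le_or_gt ‖u‖ ‖u - v‖ with hud | hdu
  · calc ‖‖u‖ ^ (α - 1) • u - ‖v‖ ^ (α - 1) • v‖
          ≤ ‖u‖ ^ (α - 1) * ‖u‖ + ‖v‖ ^ (α - 1) * ‖v‖ := by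
            rw [← hnorm, ← hnorm]; exact norm_sub_le _ _
      _ ≤ ‖u‖ ^ α + ‖v‖ ^ α :=
            add_le_add (rpow_sub_one_mul_self_le (norm_nonneg u) α)
              (rpow_sub_one_mul_self_le (norm_nonneg v) α)
      _ ≤ ‖u - v‖ ^ α + ‖u - v‖ ^ α := by gcongr; exact hvu.trans hud
      _ = 2 * ‖u - v‖ ^ α := by ring
  · have hsplit : ‖u‖ ^ (α - 1) • u - ‖v‖ ^ (α - 1) • v =
        ‖u‖ ^ (α - 1) • (u - v) + (‖u‖ ^ (α - 1) - ‖v‖ ^ (α - 1)) • v := by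
      rw [smul_sub, sub_smul]; abel
    have hd : ‖u‖ ^ (α - 1) * ‖u - v‖ ≤ ‖u - v‖ ^ α :=
      rpow_sub_one_mul_le_rpow (norm_nonneg _) hdu.le hα₁
    have hcoeff : |‖u‖ ^ (α - 1) - ‖v‖ ^ (α - 1)| * ‖v‖ ≤ ‖u‖ ^ (α - 1) * ‖u - v‖ := by
      rw [abs_sub_comm]
      refine (abs_rpow_sub_one_sub_mul_le (norm_nonneg v) hvu hα₀ hα₁).trans ?_
      gcongr
      exact norm_sub_norm_le u v
    calc ‖‖u‖ ^ (α - 1) • u - ‖v‖ ^ (α - 1) • v‖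
          ≤ ‖‖u‖ ^ (α - 1) • (u - v)‖ + ‖(‖u‖ ^ (α - 1) - ‖v‖ ^ (α - 1)) • v‖ :=
            hsplit ▸ norm_add_le _ _
      _ = ‖u‖ ^ (α - 1) * ‖u - v‖ + |‖u‖ ^ (α - 1) - ‖v‖ ^ (α - 1)| * ‖v‖ := by
            rw [norm_smul, norm_smul, norm_of_nonneg (rpow_nonneg (norm_nonneg u) _),
              Real.norm_eq_abs]
      _ ≤ 2 * ‖u - v‖ ^ α := by linarith

/-- The vector field `v(x,y,z) = r^{α-1}(-y, x, 0)`, `r = √(x²+y²)`,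
extended by `0` on the z-axis (automatic, since `0 ^ (α-1) = 0` for `α - 1 ≠ 0`). -/
noncomputable def vField (α : ℝ) (p : EuclideanSpace ℝ (Fin 3)) : EuclideanSpace ℝ (Fin 3) :=
  WithLp.toLp 2 ![-(p 1) * Real.sqrt ((p 0) ^ 2 + (p 1) ^ 2) ^ (α - 1),
    (p 0) * Real.sqrt ((p 0) ^ 2 + (p 1) ^ 2) ^ (α - 1),
    0]

def horizProj (p : EuclideanSpace ℝ (Fin 3)) : EuclideanSpace ℝ (Fin 2) := !₂[p 0, p 1]

lemma norm_horizProj (p : EuclideanSpace ℝ (Fin 3)) :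
    ‖horizProj p‖ = √(p 0 ^ 2 + p 1 ^ 2) := by
  simp [horizProj, EuclideanSpace.norm_eq, Fin.sum_univ_two]

lemma norm_horizProj_sub_le (p q : EuclideanSpace ℝ (Fin 3)) :
    ‖horizProj p - horizProj q‖ ≤ ‖p - q‖ := by
  rw [EuclideanSpace.norm_eq, EuclideanSpace.norm_eq, Fin.sum_univ_three, Fin.sum_univ_two]
  apply sqrt_le_sqrt
  simp only [horizProj, PiLp.sub_apply, Matrix.cons_val_zero, Matrix.cons_val_one,
    Real.norm_eq_abs, sq_abs]
  nlinarith [sq_nonneg (p 2 - q 2)]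

lemma norm_vField_sub (α : ℝ) (p q : EuclideanSpace ℝ (Fin 3)) :
    ‖vField α p - vField α q‖ =
      ‖‖horizProj p‖ ^ (α - 1) • horizProj p - ‖horizProj q‖ ^ (α - 1) • horizProj q‖ := by
  rw [EuclideanSpace.norm_eq, EuclideanSpace.norm_eq, Fin.sum_univ_three, Fin.sum_univ_two,
    norm_horizProj, norm_horizProj]
  simp only [vField, horizProj, PiLp.sub_apply, PiLp.smul_apply, Matrix.cons_val_zero,
    Matrix.cons_val_one, Matrix.cons_val_two, Matrix.tail_cons, Real.norm_eq_abs, sq_abs,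
    smul_eq_mul]
  congr 1
  ring

/-- `v` is `α`-Hölder continuous on the closed unit ball of `ℝ³`. -/
theorem vField_holder_on_unit_ball (α : ℝ) (hα : α ∈ Set.Ioo (0 : ℝ) 1) :
    ∃ C : ℝ, ∀ p q : EuclideanSpace ℝ (Fin 3), ‖p‖ ≤ 1 → ‖q‖ ≤ 1 →
      ‖vField α p - vField α q‖ ≤ C * ‖p - q‖ ^ α := by
  refine ⟨2, fun p q _ _ => ?_⟩
  calc ‖vField α p - vField α q‖
      = ‖‖horizProj p‖ ^ (α - 1) • horizProj p - ‖horizProj q‖ ^ (α - 1) • horizProj q‖ :=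
        norm_vField_sub α p q
    _ ≤ 2 * ‖horizProj p - horizProj q‖ ^ α :=
        norm_rpow_sub_one_smul_sub_le hα.1.le hα.2.le _ _
    _ ≤ 2 * ‖p - q‖ ^ α :=
        mul_le_mul_of_nonneg_left
          (rpow_le_rpow (norm_nonneg _) (norm_horizProj_sub_le p q) hα.1.le) zero_le_two
end

section
/- Let α ∈ (0,1), t > 0, and suppose B_r⁰(r,θ,z) ≥ c > 0 for all arguments and B_θ⁰ is bounded. Then B_θ(t,r,θ,z) = B_θ⁰(r, θ − r^{α−1}t, z) − (1−α) r^{α−1} t B_r⁰(r, θ − r^{α−1}t, z) satisfies lim_{r→0⁺} |B_θ(t,r,θ,z)| = +∞ for every fixed θ, z. -/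
open Filter Topology

theorem tendsto_abs_sub_mul_atTop {ι : Type*} {l : Filter ι} {f a b : ι → ℝ} {c M : ℝ}
    (hf : Tendsto f l atTop) (hc : 0 < c) (hb : ∀ᶠ x in l, c ≤ b x)
    (ha : ∀ᶠ x in l, |a x| ≤ M) :
    Tendsto (fun x => |a x - f x * b x|) l atTop := by
  have hfb : Tendsto (fun x => f x * b x) l atTop := by
    refine tendsto_atTop_mono' l ?_ (hf.atTop_mul_const hc)
    filter_upwards [hf.eventually_ge_atTop 0, hb] with x hfx hbx
    exact mul_le_mul_of_nonneg_left hbx hfx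
  have hsub : Tendsto (fun x => -a x + f x * b x) l atTop :=
    tendsto_atTop_add_left_of_le' l (-M)
      (ha.mono fun x hax => neg_le_neg (le_of_abs_le hax)) hfb
  refine (tendsto_abs_atTop_atTop.comp hsub).congr fun x => ?_
  simp only [Function.comp_apply, neg_add_eq_sub, abs_sub_comm]

/-- Blow-up of the angular component: if `B_r⁰ ≥ c > 0` and `B_θ⁰` is bounded, then
`|B_θ(t,r,θ,z)| → +∞` as `r → 0⁺`, for every fixed `t > 0, θ, z`. -/
theorem angular_component_blowup (α : ℝ) (hα : α ∈ Set.Ioo (0 : ℝ) 1)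
    (t : ℝ) (ht : 0 < t)
    (B0r B0θ : ℝ → ℝ → ℝ → ℝ) (c M : ℝ) (hc : 0 < c)
    (hB0r : ∀ r θ z, c ≤ B0r r θ z)
    (hB0θ : ∀ r θ z, |B0θ r θ z| ≤ M)
    (θ z : ℝ) :
    Filter.Tendsto
      (fun r : ℝ =>
        |B0θ r (θ - r ^ (α - 1) * t) z
          - (1 - α) * r ^ (α - 1) * t * B0r r (θ - r ^ (α - 1) * t) z|)
      (nhdsWithin 0 (Set.Ioi 0)) Filter.atTop := by
  have hrpow : Tendsto (fun r : ℝ => r ^ (α - 1)) (𝓝[>] 0) atTop :=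
    tendsto_rpow_neg_nhdsGT_zero (by linarith [hα.2])
  have hcoeff : Tendsto (fun r : ℝ => (1 - α) * r ^ (α - 1) * t) (𝓝[>] 0) atTop :=
    (hrpow.const_mul_atTop (by linarith [hα.2])).atTop_mul_const ht
  exact tendsto_abs_sub_mul_atTop hcoeff hc (.of_forall fun r => hB0r r _ z)
    (.of_forall fun r => hB0θ r _ z)
end
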